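/- arXiv:2301.00924 — 3 statements merged into one kernel-verified Lean document; each statement's English description precedes it below -/
import Mathlib

section
/- For every d ≥ 2 and every x = (x₁,…,x_d) ∈ ℝ^d, writing x̃ = (x₁,…,x_{d-1}), the spike function satisfies the recursion ψ_d(x) = ReLU(x_d - ψ_{d-1}(x̃)) - 2·ReLU(x_d) + ReLU(x_d + ψ_{d-1}(x̃)). -/
lemma key_spike (S t : ℝ) (hS : 0 ≤ S) :
    max 0 (1 - (S + |t|)) =
      max 0 (t - max 0 (1 - S)) - 2 * max 0 t + max 0 (t + max 0 (1 - S)) := by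
  rcases le_total (1 - S) 0 with h | h
  · rw [max_eq_left h, sub_zero, add_zero,
      max_eq_left (by linarith [abs_nonneg t] : 1 - (S + |t|) ≤ 0)]
    ring
  · rw [max_eq_right h]
    rcases abs_cases t with ⟨h1, h2⟩ | ⟨h1, h2⟩
    · rw [h1, max_eq_right h2]
      rcases le_total (1 - (S + t)) 0 with h3 | h3
      · rw [max_eq_left h3, max_eq_right (by linarith), max_eq_right (by linarith)]
        ring
      · rw [max_eq_right h3, max_eq_left (by linarith), max_eq_right (by linarith)]
        ring
    · rw [h1, max_eq_left h2.le]
      rcases le_total (1 - (S + -t)) 0 with h3 | h3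
      · rw [max_eq_left h3, max_eq_left (by linarith), max_eq_left (by linarith)]
        ring
      · rw [max_eq_right h3, max_eq_left (by linarith), max_eq_right (by linarith)]
        ring

theorem stmt_4 (d : ℕ) (hd : 2 ≤ d) (x : Fin d → ℝ)
    (ψ : ∀ k : ℕ, (Fin k → ℝ) → ℝ)
    (hψ : ∀ k (y : Fin k → ℝ), ψ k y = max 0 (1 - ∑ j, |y j|)) :
    ψ d x =
      max 0 (x ⟨d - 1, by omega⟩ - ψ (d - 1) (fun j => x (Fin.castLE (by omega) j)))
      - 2 * max 0 (x ⟨d - 1, by omega⟩)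
      + max 0 (x ⟨d - 1, by omega⟩ + ψ (d - 1) (fun j => x (Fin.castLE (by omega) j))) := by
  obtain ⟨n, rfl⟩ : ∃ n, d = n + 1 := ⟨d - 1, by omega⟩
  simp only [hψ, Nat.add_sub_cancel]
  have hsum : ∑ j : Fin (n + 1), |x j| =
      (∑ j : Fin n, |x (Fin.castLE (by omega) j)|) + |x ⟨n, by omega⟩| := by
    rw [Fin.sum_univ_castSucc]
    rfl
  rw [hsum]
  exact key_spike _ _ (Finset.sum_nonneg fun _ _ => abs_nonneg _)
end

section
/- The set of functions of the form x ↦ Σ_{j=1}^n w_j·ReLU(b_j + x), with n ∈ ℕ, w_j, b_j ∈ ℝ, is dense in C⁰([-1,1]) with respect to the supremum norm. -/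
open Finset

private def ReluRep (F : ℝ → ℝ) : Prop :=
  ∃ n, ∃ w b : Fin n → ℝ, ∀ x, F x = ∑ j, w j * max 0 (b j + x)

private lemma reluRep_term (w b : ℝ) : ReluRep (fun x => w * max 0 (b + x)) :=
  ⟨1, fun _ => w, fun _ => b, fun x => by simp⟩

private lemma reluRep_add {F G : ℝ → ℝ} (hF : ReluRep F) (hG : ReluRep G) :
    ReluRep (fun x => F x + G x) := by
  obtain ⟨n, w, b, hw⟩ := hF
  obtain ⟨m, w', b', hw'⟩ := hG
  refine ⟨n + m, Fin.append w w', Fin.append b b', fun x => ?_⟩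
  rw [Fin.sum_univ_add]
  simp [Fin.append_left, Fin.append_right, hw x, hw' x]

private lemma reluRep_sum (N : ℕ) (F : ℕ → ℝ → ℝ) (h : ∀ k, ReluRep (F k)) :
    ReluRep (fun x => ∑ k ∈ range N, F k x) := by
  induction N with
  | zero => exact ⟨0, ![], ![], fun x => by simp⟩
  | succ n ih =>
      have := reluRep_add ih (h n)
      simpa [Finset.sum_range_succ] using this

set_option maxHeartbeats 1000000 in
theorem stmt_11 (f : ℝ → ℝ) (hf : ContinuousOn f (Set.Icc (-1) 1))
    (ε : ℝ) (hε : 0 < ε) :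
    ∃ (n : ℕ) (w b : Fin n → ℝ),
      ∀ x ∈ Set.Icc (-1 : ℝ) 1,
        |f x - ∑ j, w j * max 0 (b j + x)| < ε := by
  -- uniform continuity
  have hc : UniformContinuousOn f (Set.Icc (-1) 1) :=
    isCompact_Icc.uniformContinuousOn_of_continuous hf
  obtain ⟨δ, hδ, hunif⟩ := Metric.uniformContinuousOn_iff.mp hc (ε/2) (by positivity)
  -- choose the grid size
  obtain ⟨N, hNgt⟩ := exists_nat_gt (2/δ + 1)
  have hN1 : 1 ≤ N := by
    by_contra hcon
    push_neg at hcon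
    interval_cases N
    · simp at hNgt
      nlinarith [div_pos (by norm_num : (0:ℝ) < 2) hδ]
  have hNpos : (0:ℝ) < N := by exact_mod_cast Nat.pos_of_ne_zero (by omega)
  set h : ℝ := 2 / N with hh_def
  have hh : 0 < h := by positivity
  have hhδ : h < δ := by
    rw [hh_def, div_lt_iff₀ hNpos]
    have h2 : 2 / δ < N := by linarith
    nlinarith [(div_lt_iff₀ hδ).mp h2]
  set xk : ℕ → ℝ := fun k => -1 + k * h with hxk_def
  have hxk_succ : ∀ k, xk (k+1) = xk k + h := by
    intro k; simp only [hxk_def]; push_cast; ring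
  have hxk_mono : ∀ {a b : ℕ}, a ≤ b → xk a ≤ xk b := by
    intro a b hab
    simp only [hxk_def]
    have : (a:ℝ) ≤ b := by exact_mod_cast hab
    nlinarith
  have hxkN : xk N = 1 := by
    simp only [hxk_def, hh_def]
    field_simp
    norm_num
  set s : ℕ → ℝ := fun k => (f (xk (k+1)) - f (xk k)) / h with hs_def
  -- the network function
  set G : ℝ → ℝ := fun x =>
    (f (-1) * max 0 (2 + x) + (- f (-1)) * max 0 (1 + x)) +
      ∑ k ∈ range N, (s k * max 0 (-(xk k) + x) + (- s k) * max 0 (-(xk (k+1)) + x))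
    with hG_def
  have hrep : ReluRep G :=
    reluRep_add (reluRep_add (reluRep_term _ _) (reluRep_term _ _))
      (reluRep_sum N _ (fun k => reluRep_add (reluRep_term _ _) (reluRep_term _ _)))
  obtain ⟨n, w, b, hwb⟩ := hrep
  refine ⟨n, w, b, fun x hx => ?_⟩
  rw [← hwb x]
  obtain ⟨hx1, hx2⟩ := hx
  -- simplify the affine part
  have ha2 : max 0 (2 + x) = 2 + x := max_eq_right (by linarith)
  have ha1 : max 0 (1 + x) = 1 + x := max_eq_right (by linarith)
  -- choose the interval index
  set u : ℝ := (x + 1) / h with hu_def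
  have hu0 : 0 ≤ u := div_nonneg (by linarith) hh.le
  set j : ℕ := min (N - 1) ⌊u⌋₊ with hj_def
  have hjN : j < N := lt_of_le_of_lt (min_le_left _ _) (by omega)
  have hjN' : j + 1 ≤ N := hjN
  have hxl : xk j ≤ x := by
    have h1 : (j:ℝ) ≤ ⌊u⌋₊ := by exact_mod_cast min_le_right (N-1) ⌊u⌋₊
    have h2 : (⌊u⌋₊ : ℝ) ≤ u := Nat.floor_le hu0
    have h3 : (j:ℝ) * h ≤ u * h := by nlinarith
    have h4 : u * h = x + 1 := by rw [hu_def]; field_simp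
    simp only [hxk_def]; linarith
  have hxr : x ≤ xk (j + 1) := by
    rcases le_or_gt ⌊u⌋₊ (N - 1) with hle | hlt
    · have hj_eq : j = ⌊u⌋₊ := min_eq_right hle
      have h1 : u < ⌊u⌋₊ + 1 := Nat.lt_floor_add_one u
      have h2 : u * h < ((j:ℝ) + 1) * h := by
        rw [hj_eq]; push_cast; nlinarith
      have h4 : u * h = x + 1 := by rw [hu_def]; field_simp
      simp only [hxk_def]; push_cast; linarith
    · have hj_eq : j = N - 1 := min_eq_left (le_of_lt hlt)
      have : j + 1 = N := by omega
      rw [this, hxkN]; exact hx2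
  -- compute the sum part
  have hsum : ∑ k ∈ range N, (s k * max 0 (-(xk k) + x) + (- s k) * max 0 (-(xk (k+1)) + x))
      = f (xk j) - f (-1) + s j * (x - xk j) := by
    have hstep : ∀ k ∈ range N,
        (s k * max 0 (-(xk k) + x) + (- s k) * max 0 (-(xk (k+1)) + x))
        = s k * (max 0 (x - xk k) - max 0 (x - xk (k+1))) := by
      intro k _
      rw [neg_add_eq_sub, neg_add_eq_sub]; ring
    rw [Finset.sum_congr rfl hstep]
    rw [← Finset.sum_range_add_sum_Ico _ hjN']
    have hzero : ∑ k ∈ Finset.Ico (j+1) N, s k * (max 0 (x - xk k) - max 0 (x - xk (k+1))) = 0 := by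
      apply Finset.sum_eq_zero
      intro k hk
      have hk1 : j + 1 ≤ k := (Finset.mem_Ico.mp hk).1
      have h1 : x - xk k ≤ 0 := by
        have := hxk_mono hk1; linarith
      have h2 : x - xk (k+1) ≤ 0 := by
        have := hxk_mono (le_trans hk1 (Nat.le_succ k)); linarith
      rw [max_eq_left h1, max_eq_left h2]
      ring
    rw [hzero, add_zero, Finset.sum_range_succ]
    have hmid : s j * (max 0 (x - xk j) - max 0 (x - xk (j+1)))
        = s j * (x - xk j) := by
      rw [max_eq_right (by linarith), max_eq_left (by linarith)]
      ring
    have hlow : ∀ k ∈ range j, s k * (max 0 (x - xk k) - max 0 (x - xk (k+1)))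
        = f (xk (k+1)) - f (xk k) := by
      intro k hk
      have hk1 : k + 1 ≤ j := Finset.mem_range.mp hk
      have hx1' : xk (k+1) ≤ x := le_trans (hxk_mono hk1) hxl
      have h1 : 0 ≤ x - xk k := by
        have := hxk_succ k; linarith
      have h2 : 0 ≤ x - xk (k+1) := by linarith
      have hphi : (x - xk k) - (x - xk (k+1)) = h := by rw [hxk_succ k]; ring
      have hsk : s k * h = f (xk (k+1)) - f (xk k) := by
        rw [hs_def]; field_simp
      rw [max_eq_right h1, max_eq_right h2, hphi, hsk]
    rw [Finset.sum_congr rfl hlow, Finset.sum_range_sub (fun k => f (xk k)), hmid]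
    have : xk 0 = -1 := by simp [hxk_def]
    rw [this]
  -- assemble G x
  have hGx : G x = f (xk j) + s j * (x - xk j) := by
    rw [hG_def]
    simp only
    rw [ha2, ha1, hsum]
    ring
  rw [hGx]
  -- error estimate
  have hmem1 : xk j ∈ Set.Icc (-1:ℝ) 1 := by
    constructor
    · simp only [hxk_def]
      have : 0 ≤ (j:ℝ) * h := by positivity
      linarith
    · linarith
  have hmem2 : xk (j+1) ∈ Set.Icc (-1:ℝ) 1 := by
    constructor
    · linarith
    · calc xk (j+1) ≤ xk N := hxk_mono hjN'
        _ = 1 := hxkN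
  have hxmem : x ∈ Set.Icc (-1:ℝ) 1 := ⟨hx1, hx2⟩
  have hd1 : dist x (xk j) < δ := by
    rw [Real.dist_eq, abs_of_nonneg (by linarith)]
    have := hxk_succ j
    linarith
  have hd2 : dist x (xk (j+1)) < δ := by
    rw [Real.dist_eq, abs_of_nonpos (by linarith)]
    have := hxk_succ j
    linarith
  have e1 : |f x - f (xk j)| < ε/2 := by
    have := hunif x hxmem (xk j) hmem1 hd1
    rwa [Real.dist_eq] at this
  have e2 : |f x - f (xk (j+1))| < ε/2 := by
    have := hunif x hxmem (xk (j+1)) hmem2 hd2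
    rwa [Real.dist_eq] at this
  set L : ℝ := (x - xk j) / h with hL_def
  have hL0 : 0 ≤ L := div_nonneg (by linarith) hh.le
  have hL1 : L ≤ 1 := by
    rw [hL_def, div_le_one hh]
    have := hxk_succ j; linarith
  have hkey : f x - (f (xk j) + s j * (x - xk j))
      = (1 - L) * (f x - f (xk j)) + L * (f x - f (xk (j+1))) := by
    rw [hs_def, hL_def]
    field_simp
    norm_num
    ring
  rw [hkey]
  calc |(1 - L) * (f x - f (xk j)) + L * (f x - f (xk (j+1)))|
      ≤ |(1 - L) * (f x - f (xk j))| + |L * (f x - f (xk (j+1)))| := abs_add_le _ _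
    _ = (1 - L) * |f x - f (xk j)| + L * |f x - f (xk (j+1))| := by
        rw [abs_mul, abs_mul, abs_of_nonneg (by linarith), abs_of_nonneg hL0]
    _ < ε := by nlinarith [abs_nonneg (f x - f (xk j)), abs_nonneg (f x - f (xk (j+1)))]
end

section
/- For every d ≥ 1, the set of functions of the form x ↦ Σ_{j=1}^k w_j · max(0, 1 - ‖(x - c_j)‖₁/δ_j), with k ∈ ℕ, w_j ∈ ℝ, c_j ∈ ℝ^d and δ_j > 0, is dense in C⁰([-1,1]^d) with respect to the supremum norm. -/
open MeasureTheory

namespace Stmt12Aux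

noncomputable def psi (d : ℕ) (y : Fin d → ℝ) : ℝ := max 0 (1 - ∑ i, |y i|)

lemma psi_nonneg (d : ℕ) (y : Fin d → ℝ) : 0 ≤ psi d y := le_max_left _ _

lemma psi_le_one (d : ℕ) (y : Fin d → ℝ) : psi d y ≤ 1 := by
  have h : (0:ℝ) ≤ ∑ i, |y i| := Finset.sum_nonneg fun i _ => abs_nonneg _
  unfold psi
  have : 1 - ∑ i, |y i| ≤ 1 := by linarith
  exact max_le (by norm_num) this

lemma psi_lip (d : ℕ) (u v : Fin d → ℝ) : |psi d u - psi d v| ≤ ∑ i, |u i - v i| := by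
  unfold psi
  rw [max_comm 0 _, max_comm 0 _]
  refine le_trans (abs_max_sub_max_le_abs _ _ _) ?_
  have h1 : |(1 - ∑ i, |u i|) - (1 - ∑ i, |v i|)| = |∑ i, (|v i| - |u i|)| := by
    rw [Finset.sum_sub_distrib]; ring_nf
  rw [h1]
  refine le_trans (Finset.abs_sum_le_sum_abs _ _) (Finset.sum_le_sum fun i _ => ?_)
  rw [abs_sub_comm]
  exact le_trans (abs_abs_sub_abs_le_abs_sub _ _) (le_refl _)

lemma psi_continuous (d : ℕ) : Continuous (psi d) := by
  refine continuous_const.max (continuous_const.sub ?_)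
  exact continuous_finset_sum _ fun i _ => (continuous_apply i).abs

lemma psi_eq_zero (d : ℕ) {y : Fin d → ℝ} (h : 1 ≤ ∑ i, |y i|) : psi d y = 0 :=
  max_eq_left (by linarith)

lemma psi_hcs (d : ℕ) : HasCompactSupport (psi d) := by
  refine HasCompactSupport.intro (isCompact_Icc (a := fun _ => (-1:ℝ)) (b := fun _ => (1:ℝ))) ?_
  intro y hy
  apply psi_eq_zero
  rw [Set.mem_Icc] at hy
  have h : ∃ i, y i < -1 ∨ 1 < y i := by
    by_contra hno
    push_neg at hno
    exact hy ⟨fun i => (hno i).1, fun i => (hno i).2⟩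
  obtain ⟨i, hi⟩ := h
  have h1 : 1 ≤ |y i| := by
    rcases hi with h | h
    · rw [abs_of_neg (by linarith)]; linarith
    · rw [abs_of_pos (by linarith)]; linarith
  exact le_trans h1 (Finset.single_le_sum (f := fun j => |y j|) (fun j _ => abs_nonneg _) (Finset.mem_univ i))

lemma psi_integrable (d : ℕ) : Integrable (psi d) :=
  (psi_continuous d).integrable_of_hasCompactSupport (psi_hcs d)

lemma psi_integral_pos (d : ℕ) : 0 < ∫ y, psi d y := by
  rw [integral_pos_iff_support_of_nonneg (psi_nonneg d) (psi_integrable d)]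
  have hU : IsOpen {y : Fin d → ℝ | ∑ i, |y i| < 1} :=
    isOpen_lt (continuous_finset_sum _ fun i _ => (continuous_apply i).abs) continuous_const
  have hsub : {y : Fin d → ℝ | ∑ i, |y i| < 1} ⊆ Function.support (psi d) := by
    intro y hy
    simp only [Set.mem_setOf_eq] at hy
    simp only [Function.mem_support, psi]
    intro hc
    have := le_max_right (0:ℝ) (1 - ∑ i, |y i|)
    rw [hc] at this
    linarith
  refine lt_of_lt_of_le ?_ (measure_mono hsub)
  refine hU.measure_pos volume ⟨0, ?_⟩
  simp


lemma spike_eq (d : ℕ) {δ : ℝ} (hδ : 0 < δ) (x c : Fin d → ℝ) :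
    max 0 (1 - (∑ i, |x i - c i|) / δ) = psi d (δ⁻¹ • (x - c)) := by
  unfold psi
  congr 1
  congr 1
  rw [Finset.sum_div]
  refine Finset.sum_congr rfl fun i _ => ?_
  simp only [Pi.smul_apply, Pi.sub_apply, smul_eq_mul, abs_mul, abs_of_pos (inv_pos.mpr hδ)]
  rw [div_eq_inv_mul]

lemma integral_psi_shift (d : ℕ) {δ : ℝ} (hδ : 0 < δ) (x : Fin d → ℝ) :
    ∫ c, psi d (δ⁻¹ • (x - c)) = δ ^ d * ∫ y, psi d y := by
  have h1 : ∫ c, psi d (δ⁻¹ • (x - c)) = ∫ y, psi d (δ⁻¹ • y) :=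
    integral_sub_left_eq_self (fun y => psi d (δ⁻¹ • y)) volume x
  rw [h1, MeasureTheory.Measure.integral_comp_smul volume (psi d) δ⁻¹]
  rw [Module.finrank_fintype_fun_eq_card, Fintype.card_fin]
  rw [inv_pow, inv_inv, abs_of_pos (pow_pos hδ d), smul_eq_mul]

def clamp (d : ℕ) (x : Fin d → ℝ) : Fin d → ℝ := fun i => max (-1) (min (x i) 1)

lemma clamp_mem (d : ℕ) (x : Fin d → ℝ) :
    clamp d x ∈ Set.Icc (fun _ => (-1:ℝ)) (fun _ => (1:ℝ)) := by
  rw [Set.mem_Icc]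
  constructor
  · intro i; exact le_max_left _ _
  · intro i; exact max_le (by norm_num) (min_le_right _ _)

lemma clamp_eq (d : ℕ) {x : Fin d → ℝ}
    (hx : x ∈ Set.Icc (fun _ => (-1:ℝ)) (fun _ => (1:ℝ))) : clamp d x = x := by
  rw [Set.mem_Icc] at hx
  funext i
  have h1 := hx.1 i
  have h2 := hx.2 i
  simp only [clamp]
  rw [min_eq_left h2, max_eq_right h1]

lemma clamp_dist (d : ℕ) (u v : Fin d → ℝ) : dist (clamp d u) (clamp d v) ≤ dist u v := by
  rw [dist_pi_le_iff dist_nonneg]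
  intro i
  refine le_trans ?_ (dist_le_pi_dist u v i)
  rw [Real.dist_eq, Real.dist_eq]
  simp only [clamp]
  rw [max_comm (-1) _, max_comm (-1) _]
  refine le_trans (abs_max_sub_max_le_abs _ _ _) ?_
  refine le_trans (abs_min_sub_min_le_max _ _ _ _) ?_
  simp

lemma riemann_sum (d n : ℕ) (hn : 0 < n) {η : ℝ} (hηdef : η = 4 / n)
    (G : (Fin d → ℝ) → ℝ) (hG : Continuous G) (B : ℝ)
    (hosc : ∀ u v : Fin d → ℝ, (∀ i, |u i - v i| ≤ η) → |G u - G v| ≤ B)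
    (hzero : ∀ c : Fin d → ℝ, (∃ i, c i ∉ Set.Ico (-2:ℝ) 2) → G c = 0) :
    |(∫ c, G c) - ∑ κ : Fin d → Fin n, G (fun i => -2 + (κ i : ℕ) * η) * η ^ d|
      ≤ 4 ^ d * B := by
  have hnR : (0:ℝ) < n := by exact_mod_cast hn
  have hη : 0 < η := by rw [hηdef]; positivity
  have hnη : (n:ℝ) * η = 4 := by rw [hηdef]; field_simp
  set g : ℕ → ℝ := fun m => -2 + m * η with hg
  have hgmono : ∀ a b : ℕ, a ≤ b → g a ≤ g b := by
    intro a b hab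
    simp only [hg]
    have : (a:ℝ) ≤ b := by exact_mod_cast hab
    nlinarith
  have hgdiff : ∀ m : ℕ, g (m+1) - g m = η := by
    intro m; simp only [hg]; push_cast; ring
  set cell : (Fin d → Fin n) → Set (Fin d → ℝ) :=
    fun κ => Set.univ.pi fun i => Set.Ico (g (κ i)) (g (κ i + 1)) with hcell
  set corner : (Fin d → Fin n) → (Fin d → ℝ) := fun κ i => g (κ i) with hcorner
  -- Ico disjointness
  have hIco : ∀ a b : ℕ, a ≠ b →
      Disjoint (Set.Ico (g a) (g (a+1))) (Set.Ico (g b) (g (b+1))) := by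
    intro a b hab
    rw [Set.Ico_disjoint_Ico]
    rcases Nat.lt_or_ge a b with h | h
    · exact le_trans (min_le_left _ _) (le_trans (hgmono _ _ h) (le_max_right _ _))
    · have h' : b < a := lt_of_le_of_ne h (Ne.symm hab)
      exact le_trans (min_le_right _ _) (le_trans (hgmono _ _ h') (le_max_left _ _))
  have hcellMeas : ∀ κ, MeasurableSet (cell κ) := fun κ =>
    MeasurableSet.univ_pi fun i => measurableSet_Ico
  have hdisj : Pairwise (Function.onFun Disjoint cell) := by
    intro κ κ' hne
    have : ∃ i, κ i ≠ κ' i := by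
      by_contra hno; push_neg at hno; exact hne (funext hno)
    obtain ⟨i, hi⟩ := this
    rw [Function.onFun, Set.disjoint_left]
    intro c hc hc'
    have h1 : c i ∈ Set.Ico (g (κ i)) (g (κ i + 1)) := hc i (Set.mem_univ i)
    have h2 : c i ∈ Set.Ico (g (κ' i)) (g (κ' i + 1)) := hc' i (Set.mem_univ i)
    have hdis := hIco (κ i) (κ' i) (fun h => hi (Fin.ext h))
    exact Set.disjoint_left.mp hdis h1 h2
  -- compact support & integrability
  have hGcs : HasCompactSupport G := by
    refine HasCompactSupport.intro (isCompact_Icc (a := fun _ => (-2:ℝ)) (b := fun _ => (2:ℝ))) ?_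
    intro c hc
    refine hzero c ?_
    rw [Set.mem_Icc] at hc
    by_contra hno
    push_neg at hno
    refine hc ⟨fun i => ?_, fun i => ?_⟩
    · exact (Set.mem_Ico.mp (hno i)).1
    · exact le_of_lt (Set.mem_Ico.mp (hno i)).2
  have hGint : Integrable G := hG.integrable_of_hasCompactSupport hGcs
  -- reduce to union of cells
  have hcover : ∀ c : Fin d → ℝ, c ∉ (⋃ κ, cell κ) → G c = 0 := by
    intro c hc
    by_contra hGc
    have hmem : ∀ i, c i ∈ Set.Ico (-2:ℝ) 2 := by
      intro i
      by_contra hni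
      exact hGc (hzero c ⟨i, hni⟩)
    refine hc ?_
    rw [Set.mem_iUnion]
    have hκ : ∀ i : Fin d, ∃ k : Fin n, c i ∈ Set.Ico (g k) (g (k+1)) := by
      intro i
      obtain ⟨h1, h2⟩ := Set.mem_Ico.mp (hmem i)
      have ht0 : (0:ℝ) ≤ (c i + 2) / η := div_nonneg (by linarith) hη.le
      set k := ⌊(c i + 2) / η⌋₊ with hk
      have hkn : k < n := by
        rw [hk, Nat.floor_lt ht0]
        rw [div_lt_iff₀ hη]
        nlinarith
      refine ⟨⟨k, hkn⟩, ?_⟩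
      constructor
      · have := Nat.floor_le ht0
        rw [← hk] at this
        rw [le_div_iff₀ hη] at this
        simp only [hg]
        linarith
      · have := Nat.lt_floor_add_one ((c i + 2) / η)
        rw [← hk, div_lt_iff₀ hη] at this
        simp only [hg]
        push_cast
        linarith
    choose κ hκ using hκ
    exact ⟨κ, fun i _ => hκ i⟩
  have hstep1 : ∫ c, G c = ∫ c in ⋃ κ, cell κ, G c :=
    (setIntegral_eq_integral_of_forall_compl_eq_zero hcover).symm
  have hstep2 : ∫ c in ⋃ κ, cell κ, G c = ∑ κ, ∫ c in cell κ, G c := by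
    rw [integral_iUnion hcellMeas hdisj hGint.integrableOn]
    exact tsum_fintype _
  -- cell volume
  have hvol : ∀ κ, volume (cell κ) = ENNReal.ofReal η ^ d := by
    intro κ
    rw [hcell]
    rw [volume_pi_pi]
    have : ∀ i : Fin d, volume (Set.Ico (g (κ i)) (g (κ i + 1))) = ENNReal.ofReal η := by
      intro i; rw [Real.volume_Ico, hgdiff]
    rw [Finset.prod_congr rfl (fun i _ => this i)]
    simp [Finset.prod_const]
  have hvolR : ∀ κ, (volume (cell κ)).toReal = η ^ d := by
    intro κ
    rw [hvol κ, ENNReal.toReal_pow, ENNReal.toReal_ofReal hη.le]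
  have hvollt : ∀ κ, volume (cell κ) < ⊤ := by
    intro κ; rw [hvol κ]
    exact ENNReal.pow_lt_top ENNReal.ofReal_lt_top
  have hB0 : 0 ≤ B := by
    have := hosc (fun _ => 0) (fun _ => 0) (fun i => by simpa using hη.le)
    simpa using le_trans (abs_nonneg _) this
  -- per-cell bound
  have hcellbd : ∀ κ, |(∫ c in cell κ, G c) - G (corner κ) * η ^ d| ≤ B * η ^ d := by
    intro κ
    have hint : IntegrableOn G (cell κ) := hGint.integrableOn
    have hconst : IntegrableOn (fun _ => G (corner κ)) (cell κ) :=
      (integrableOn_const_iff).mpr (Or.inr (hvollt κ))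
    have heq : ∫ c in cell κ, (G c - G (corner κ)) =
        (∫ c in cell κ, G c) - G (corner κ) * η ^ d := by
      rw [integral_sub hint hconst, setIntegral_const, measureReal_def, hvolR κ, smul_eq_mul, mul_comm]
    rw [← heq]
    have hbd : ∀ c ∈ cell κ, ‖G c - G (corner κ)‖ ≤ B := by
      intro c hc
      rw [Real.norm_eq_abs]
      refine hosc c (corner κ) fun i => ?_
      have hci : c i ∈ Set.Ico (g (κ i)) (g (κ i + 1)) := hc i (Set.mem_univ i)
      obtain ⟨h1, h2⟩ := Set.mem_Ico.mp hci
      have := hgdiff (κ i)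
      rw [abs_of_nonneg (by simp only [hcorner]; linarith)]
      simp only [hcorner]
      linarith
    have := norm_setIntegral_le_of_norm_le_const (hvollt κ) hbd
    rw [Real.norm_eq_abs, measureReal_def, hvolR κ] at this
    exact this
  -- assemble
  rw [hstep1, hstep2]
  have h1 : (∑ κ, ∫ c in cell κ, G c) - ∑ κ : Fin d → Fin n, G (fun i => -2 + (κ i : ℕ) * η) * η ^ d
      = ∑ κ, ((∫ c in cell κ, G c) - G (corner κ) * η ^ d) := by
    rw [Finset.sum_sub_distrib]
  rw [h1]
  refine le_trans (Finset.abs_sum_le_sum_abs _ _) ?_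
  refine le_trans (Finset.sum_le_sum fun κ _ => hcellbd κ) ?_
  rw [Finset.sum_const, Finset.card_univ, Fintype.card_fun, Fintype.card_fin, Fintype.card_fin]
  rw [nsmul_eq_mul]
  have h2 : ((n ^ d : ℕ) : ℝ) * (B * η ^ d) = ((n:ℝ) * η) ^ d * B := by push_cast; ring
  rw [h2, hnη]

-- helper: if some coordinate gap is ≥ δ then shifted spike vanishes
lemma psi_shift_zero (d : ℕ) {δ : ℝ} (hδ : 0 < δ) {x c : Fin d → ℝ}
    (h : ∃ i, δ ≤ |x i - c i|) : psi d (δ⁻¹ • (x - c)) = 0 := by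
  obtain ⟨i, hi⟩ := h
  refine psi_eq_zero d ?_
  have h1 : (1:ℝ) ≤ |(δ⁻¹ • (x - c)) i| := by
    simp only [Pi.smul_apply, Pi.sub_apply, smul_eq_mul, abs_mul,
      abs_of_pos (inv_pos.mpr hδ)]
    rw [← inv_mul_cancel₀ (ne_of_gt hδ)]
    exact mul_le_mul_of_nonneg_left hi (by positivity)
  exact le_trans h1 (Finset.single_le_sum (f := fun j => |(δ⁻¹ • (x - c)) j|)
    (fun j _ => abs_nonneg _) (Finset.mem_univ i))

-- helper: if shifted spike is nonzero then all coordinate gaps are < δ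
lemma psi_shift_pos (d : ℕ) {δ : ℝ} (hδ : 0 < δ) {x c : Fin d → ℝ}
    (h : psi d (δ⁻¹ • (x - c)) ≠ 0) : ∀ i, |x i - c i| < δ := by
  intro i
  by_contra hno
  push_neg at hno
  exact h (psi_shift_zero d hδ ⟨i, hno⟩)

theorem main (d : ℕ) (hd : 1 ≤ d)
    (f : (Fin d → ℝ) → ℝ)
    (hf : ContinuousOn f (Set.Icc (fun _ => -1) (fun _ => 1)))
    (ε : ℝ) (hε : 0 < ε) :
    ∃ (k : ℕ) (w : Fin k → ℝ) (c : Fin k → Fin d → ℝ) (δ : Fin k → ℝ),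
      (∀ j, 0 < δ j) ∧
      ∀ x ∈ Set.Icc (fun _ => (-1 : ℝ)) (fun _ => (1 : ℝ)),
        |f x - ∑ j, w j * max 0 (1 - (∑ i, |x i - c j i|) / δ j)| < ε := by
  have hdR : (1:ℝ) ≤ d := by exact_mod_cast hd
  set S : Set (Fin d → ℝ) := Set.Icc (fun _ => (-1:ℝ)) (fun _ => (1:ℝ)) with hS
  obtain ⟨M, hM⟩ := (isCompact_Icc (a := fun _ => (-1:ℝ)) (b := fun _ => (1:ℝ))).exists_bound_of_continuousOn hf
  have h0S : (fun _ => (0:ℝ)) ∈ S := by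
    rw [hS, Set.mem_Icc]
    exact ⟨fun i => by norm_num, fun i => by norm_num⟩
  have hM0 : 0 ≤ M := le_trans (norm_nonneg _) (hM _ h0S)
  have hUC := (isCompact_Icc (a := fun _ => (-1:ℝ)) (b := fun _ => (1:ℝ))).uniformContinuousOn_of_continuous hf
  rw [Metric.uniformContinuousOn_iff] at hUC
  set F : (Fin d → ℝ) → ℝ := fun c => f (clamp d c) with hF
  have hclampcont : Continuous (clamp d) :=
    continuous_pi fun i => continuous_const.max ((continuous_apply i).min continuous_const)
  have hFcont : Continuous F := hf.comp_continuous hclampcont (clamp_mem d)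
  have hFb : ∀ c, |F c| ≤ M := fun c => by
    rw [hF]; exact (Real.norm_eq_abs _ ▸ hM _ (clamp_mem d c))
  -- modulus-of-continuity for F
  have hFmod : ∀ ε' > (0:ℝ), ∃ θ > (0:ℝ), ∀ u v : Fin d → ℝ,
      dist u v < θ → |F u - F v| < ε' := by
    intro ε' hε'
    obtain ⟨θ, hθpos, hθ⟩ := hUC ε' hε'
    refine ⟨θ, hθpos, fun u v huv => ?_⟩
    have := hθ (clamp d u) (clamp_mem d u) (clamp d v) (clamp_mem d v)
      (lt_of_le_of_lt (clamp_dist d u v) huv)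
    rwa [Real.dist_eq] at this
  obtain ⟨θ₁, hθ₁pos, hθ₁⟩ := hFmod (ε/4) (by positivity)
  set δ₀ : ℝ := min θ₁ 1 with hδ₀
  have hδ₀pos : 0 < δ₀ := lt_min hθ₁pos one_pos
  have hδ₀1 : δ₀ ≤ 1 := min_le_right _ _
  have hδ₀θ : δ₀ ≤ θ₁ := min_le_left _ _
  set Z : ℝ := ∫ y, psi d y with hZ
  have hZpos : 0 < Z := psi_integral_pos d
  set K' : ℝ := δ₀ ^ d * Z with hK'
  have hK'pos : 0 < K' := mul_pos (pow_pos hδ₀pos d) hZpos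
  set B₀ : ℝ := ε/2 * K' / 4 ^ d with hB₀
  have hB₀pos : 0 < B₀ := by positivity
  obtain ⟨θ₂, hθ₂pos, hθ₂⟩ := hFmod (B₀/2) (by positivity)
  set η₀ : ℝ := min (θ₂/2) (B₀ * δ₀ / (2 * (M+1) * d)) with hη₀
  have hη₀pos : 0 < η₀ := by
    refine lt_min (by positivity) ?_
    have : (0:ℝ) < d := by linarith
    positivity
  set n : ℕ := ⌈4/η₀⌉₊ with hn
  have hnpos : 0 < n := Nat.ceil_pos.mpr (by positivity)
  have hnR : (0:ℝ) < n := by exact_mod_cast hnpos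
  set η : ℝ := 4 / n with hηdef
  have hηpos : 0 < η := by positivity
  have hηle : η ≤ η₀ := by
    have h1 : (4/η₀ : ℝ) ≤ n := Nat.le_ceil _
    rw [div_le_iff₀ hη₀pos] at h1
    rw [hηdef, div_le_iff₀ hnR]
    linarith [mul_comm (η₀) (n:ℝ)]
  set corner : (Fin d → Fin n) → Fin d → ℝ := fun κ i => -2 + (κ i : ℕ) * η with hcorner
  set e : Fin (Fintype.card (Fin d → Fin n)) ≃ (Fin d → Fin n) :=
    (Fintype.equivFin (Fin d → Fin n)).symm with he
  refine ⟨Fintype.card (Fin d → Fin n),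
    fun j => F (corner (e j)) * η ^ d / K',
    fun j => corner (e j),
    fun _ => δ₀,
    fun j => hδ₀pos, ?_⟩
  intro x hx
  -- the integrand
  set G : (Fin d → ℝ) → ℝ := fun c => F c * psi d (δ₀⁻¹ • (x - c)) with hG
  have hψcont : Continuous (fun c : Fin d → ℝ => psi d (δ₀⁻¹ • (x - c))) :=
    (psi_continuous d).comp (((continuous_const.sub continuous_id).const_smul δ₀⁻¹))
  have hψcs : HasCompactSupport (fun c : Fin d → ℝ => psi d (δ₀⁻¹ • (x - c))) := by
    refine HasCompactSupport.intro
      (isCompact_Icc (a := fun i => x i - 1) (b := fun i => x i + 1)) ?_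
    intro c hc
    refine psi_shift_zero d hδ₀pos ?_
    rw [Set.mem_Icc] at hc
    have h : ∃ i, c i < x i - 1 ∨ x i + 1 < c i := by
      by_contra hno; push_neg at hno
      exact hc ⟨fun i => (hno i).1, fun i => (hno i).2⟩
    obtain ⟨i, hi⟩ := h
    refine ⟨i, ?_⟩
    rcases hi with h | h
    · rw [abs_of_pos (by linarith)]; linarith
    · rw [abs_of_neg (by linarith)]; linarith
  have hψint : Integrable (fun c : Fin d → ℝ => psi d (δ₀⁻¹ • (x - c))) :=
    hψcont.integrable_of_hasCompactSupport hψcs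
  have hGcont : Continuous G := hFcont.mul hψcont
  have hGcs : HasCompactSupport G := hψcs.mul_left
  have hGint : Integrable G := hGcont.integrable_of_hasCompactSupport hGcs
  have hIψ : ∫ c, psi d (δ₀⁻¹ • (x - c)) = K' := by
    rw [integral_psi_shift d hδ₀pos x]
  -- (1) approximate identity bound
  have happrox : |F x * K' - ∫ c, G c| ≤ ε/4 * K' := by
    have hdiff : F x * K' - ∫ c, G c = ∫ c, (F x - F c) * psi d (δ₀⁻¹ • (x - c)) := by
      rw [← hIψ, ← integral_const_mul, ← integral_sub (hψint.const_mul (F x)) hGint]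
      refine integral_congr_ae (Filter.Eventually.of_forall fun c => ?_)
      simp only [hG]; ring
    rw [hdiff]
    have hbd : ∀ c, ‖(F x - F c) * psi d (δ₀⁻¹ • (x - c))‖ ≤
        ε/4 * psi d (δ₀⁻¹ • (x - c)) := by
      intro c
      by_cases hψ0 : psi d (δ₀⁻¹ • (x - c)) = 0
      · simp [hψ0]
      · have hgap := psi_shift_pos d hδ₀pos hψ0
        have hdist : dist x c < θ₁ := by
          rw [dist_pi_lt_iff hθ₁pos]
          intro i
          rw [Real.dist_eq]
          exact lt_of_lt_of_le (hgap i) hδ₀θ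
        have hFd := hθ₁ x c hdist
        rw [Real.norm_eq_abs, abs_mul, abs_of_nonneg (psi_nonneg d _)]
        exact mul_le_mul_of_nonneg_right hFd.le (psi_nonneg d _)
    have := norm_integral_le_of_norm_le (hψint.const_mul (ε/4))
      (Filter.Eventually.of_forall hbd)
    rw [Real.norm_eq_abs] at this
    rw [integral_const_mul, hIψ] at this
    exact this
  -- (2) Riemann sum bound
  have hosc : ∀ u v : Fin d → ℝ, (∀ i, |u i - v i| ≤ η) → |G u - G v| ≤ B₀ := by
    intro u v huv
    have hduv : dist u v < θ₂ := by
      have h1 : dist u v ≤ η := by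
        rw [dist_pi_le_iff hηpos.le]
        intro i; rw [Real.dist_eq]; exact huv i
      have h2 : η ≤ θ₂/2 := le_trans hηle (min_le_left _ _)
      linarith
    have hF2 : |F u - F v| ≤ B₀/2 := (hθ₂ u v hduv).le
    have hψ2 : |psi d (δ₀⁻¹ • (x - u)) - psi d (δ₀⁻¹ • (x - v))| ≤ d * (δ₀⁻¹ * η) := by
      refine le_trans (psi_lip d _ _) ?_
      have heach : ∀ i : Fin d, |(δ₀⁻¹ • (x - u)) i - (δ₀⁻¹ • (x - v)) i| ≤ δ₀⁻¹ * η := by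
        intro i
        simp only [Pi.smul_apply, Pi.sub_apply, smul_eq_mul]
        have : δ₀⁻¹ * (x i - u i) - δ₀⁻¹ * (x i - v i) = δ₀⁻¹ * (v i - u i) := by ring
        rw [this, abs_mul, abs_of_pos (inv_pos.mpr hδ₀pos), abs_sub_comm]
        exact mul_le_mul_of_nonneg_left (huv i) (by positivity)
      refine le_trans (Finset.sum_le_sum fun i _ => heach i) ?_
      rw [Finset.sum_const, Finset.card_univ, Fintype.card_fin, nsmul_eq_mul]
    have hkey : M * ((d:ℝ) * (δ₀⁻¹ * η)) ≤ B₀/2 := by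
      have hηb : η ≤ B₀ * δ₀ / (2 * (M+1) * d) := le_trans hηle (min_le_right _ _)
      have hd0 : (0:ℝ) < d := by linarith
      rw [le_div_iff₀ (by positivity)] at hηb
      have hδinv : δ₀⁻¹ * δ₀ = 1 := inv_mul_cancel₀ (ne_of_gt hδ₀pos)
      have h1 : M * ((d:ℝ) * (δ₀⁻¹ * η)) * δ₀ ≤ (B₀/2) * δ₀ := by
        have expand : M * ((d:ℝ) * (δ₀⁻¹ * η)) * δ₀ = M * ((d:ℝ) * η) * (δ₀⁻¹ * δ₀) := by ring
        rw [expand, hδinv, mul_one]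
        nlinarith
      exact le_of_mul_le_mul_right h1 hδ₀pos
    have hdecomp : G u - G v = (F u - F v) * psi d (δ₀⁻¹ • (x - u))
        + F v * (psi d (δ₀⁻¹ • (x - u)) - psi d (δ₀⁻¹ • (x - v))) := by
      simp only [hG]; ring
    rw [hdecomp]
    refine le_trans (abs_add_le _ _) ?_
    have t1 : |(F u - F v) * psi d (δ₀⁻¹ • (x - u))| ≤ B₀/2 := by
      rw [abs_mul, abs_of_nonneg (psi_nonneg d _)]
      calc |F u - F v| * psi d (δ₀⁻¹ • (x - u)) ≤ (B₀/2) * 1 :=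
            mul_le_mul hF2 (psi_le_one d _) (psi_nonneg d _) (by positivity)
        _ = B₀/2 := mul_one _
    have t2 : |F v * (psi d (δ₀⁻¹ • (x - u)) - psi d (δ₀⁻¹ • (x - v)))| ≤ B₀/2 := by
      rw [abs_mul]
      calc |F v| * |psi d (δ₀⁻¹ • (x - u)) - psi d (δ₀⁻¹ • (x - v))|
          ≤ M * ((d:ℝ) * (δ₀⁻¹ * η)) :=
            mul_le_mul (hFb v) hψ2 (abs_nonneg _) hM0
        _ ≤ B₀/2 := hkey
    linarith
  have hzero : ∀ c : Fin d → ℝ, (∃ i, c i ∉ Set.Ico (-2:ℝ) 2) → G c = 0 := by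
    intro c hc
    obtain ⟨i, hi⟩ := hc
    rw [Set.mem_Ico] at hi
    push_neg at hi
    rw [hS, Set.mem_Icc] at hx
    have hx1 : (-1:ℝ) ≤ x i := hx.1 i
    have hx2 : x i ≤ 1 := hx.2 i
    have hgap : δ₀ ≤ |x i - c i| := by
      refine le_trans hδ₀1 ?_
      rcases lt_or_ge (c i) (-2) with h | h
      · rw [abs_of_pos (by linarith)]; linarith
      · have := hi h
        rw [abs_of_neg (by linarith)]; linarith
    simp only [hG]
    rw [psi_shift_zero d hδ₀pos ⟨i, hgap⟩, mul_zero]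
  have hrs := riemann_sum d n hnpos hηdef G hGcont B₀ hosc hzero
  have h4d : (4:ℝ) ^ d * B₀ = ε/2 * K' := by
    rw [hB₀]; field_simp
  rw [h4d] at hrs
  -- (3) final assembly
  have hrs2 : |(∫ c, G c) - ∑ κ : Fin d → Fin n, G (corner κ) * η ^ d| ≤ ε/2 * K' := hrs
  set Ssum : ℝ := ∑ κ : Fin d → Fin n, G (corner κ) * η ^ d with hSsum
  have hsumeq : ∑ j, (F (corner (e j)) * η ^ d / K') *
      max 0 (1 - (∑ i, |x i - corner (e j) i|) / δ₀) = Ssum / K' := by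
    rw [hSsum, Finset.sum_div, ← Equiv.sum_comp e (fun κ => G (corner κ) * η ^ d / K')]
    refine Finset.sum_congr rfl fun j _ => ?_
    rw [spike_eq d hδ₀pos x (corner (e j))]
    simp only [hG]
    ring
  rw [hsumeq]
  have hfx : f x = F x := by
    show f x = f (clamp d x)
    rw [clamp_eq d hx]
  rw [hfx]
  have hdec : F x - Ssum / K' = (F x * K' - ∫ c, G c)/K' + ((∫ c, G c) - Ssum)/K' := by
    field_simp
    ring
  rw [hdec]
  refine lt_of_le_of_lt (abs_add_le _ _) ?_
  have e1 : |(F x * K' - ∫ c, G c)/K'| ≤ ε/4 := by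
    rw [abs_div, abs_of_pos hK'pos, div_le_iff₀ hK'pos]
    calc |F x * K' - ∫ c, G c| ≤ ε/4 * K' := happrox
      _ = ε/4 * K' := rfl
  have e2 : |((∫ c, G c) - Ssum)/K'| ≤ ε/2 := by
    rw [abs_div, abs_of_pos hK'pos, div_le_iff₀ hK'pos]
    exact hrs2
  linarith

end Stmt12Aux

theorem stmt_12 (d : ℕ) (hd : 1 ≤ d)
    (f : (Fin d → ℝ) → ℝ)
    (hf : ContinuousOn f (Set.Icc (fun _ => -1) (fun _ => 1)))
    (ε : ℝ) (hε : 0 < ε) :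
    ∃ (k : ℕ) (w : Fin k → ℝ) (c : Fin k → Fin d → ℝ) (δ : Fin k → ℝ),
      (∀ j, 0 < δ j) ∧
      ∀ x ∈ Set.Icc (fun _ => (-1 : ℝ)) (fun _ => (1 : ℝ)),
        |f x - ∑ j, w j * max 0 (1 - (∑ i, |x i - c j i|) / δ j)| < ε :=
  Stmt12Aux.main d hd f hf ε hε
end
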